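/- arXiv:2410.16102 — 4 statements merged into one kernel-verified Lean document; each statement's English description precedes it below -/
import Mathlib

section
/- The program-agnostic semantics does not determine the results of iterated application: there exist two sets B₁, B₂ of functions ℤ → Bool (namely B₁ = {λx. x = 1, λx. x ≠ 1} and B₂ = {λx. x = 2, λx. x ≠ 2}) such that for every input x the image sets { b x | b ∈ B₁ } and { b x | b ∈ B₂ } are both equal to {true, false}, yet the sets of possible outcomes of the guarded iterations 'while b(x) do x := x+1' starting from x = 0 differ: for B₁ the reachable terminal values are {0, 1}, while for B₂ they are {0, 2}. -/
/- Semantics of the loop `while b(x) do x := x + 1` starting at `x`: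
the first value `x + n` with `b (x + n) = false`, if any. -/

open Classical in
noncomputable def Wb (b : ℤ → Bool) (x : ℤ) : Option ℤ :=
  if h : ∃ n : ℕ, b (x + (n : ℤ)) = false then some (x + (Nat.find h : ℤ)) else none

/-- Terminal values of a set of guards, from initial value `0`. -/
noncomputable def termSet (B : Set (ℤ → Bool)) : Set ℤ :=
  {y | ∃ b ∈ B, Wb b 0 = some y}

lemma Wb_eq_of (b : ℤ → Bool) (n : ℕ) (hn : b (0 + (n : ℤ)) = false)
    (hmin : ∀ m : ℕ, m < n → b (0 + (m : ℤ)) = true) : Wb b 0 = some (n : ℤ) := by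
  unfold Wb
  split
  · next h' =>
    simp only [zero_add, Option.some.injEq, Nat.cast_inj]
    rw [Nat.find_eq_iff]
    exact ⟨by simpa using hn, fun m hm => by simpa using hmin m hm⟩
  · next h' => exact absurd ⟨n, hn⟩ h'

lemma Wb1 : Wb (fun x => decide (x = 1)) 0 = some 0 := by
  have := Wb_eq_of (fun x => decide (x = 1)) 0 (by norm_num) (by omega)
  simpa using this

lemma Wb1' : Wb (fun x => decide (x ≠ 1)) 0 = some 1 := by
  have := Wb_eq_of (fun x => decide (x ≠ 1)) 1 (by norm_num)
    (by intro m hm; interval_cases m <;> norm_num)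
  simpa using this

lemma Wb2 : Wb (fun x => decide (x = 2)) 0 = some 0 := by
  have := Wb_eq_of (fun x => decide (x = 2)) 0 (by norm_num) (by omega)
  simpa using this

lemma Wb2' : Wb (fun x => decide (x ≠ 2)) 0 = some 2 := by
  have := Wb_eq_of (fun x => decide (x ≠ 2)) 2 (by norm_num)
    (by intro m hm; interval_cases m <;> norm_num)
  simpa using this


/-- Two sets of guards with equal pointwise images but different loop terminal sets. -/
theorem guards_indistinguishable_loops_differ :
    let B₁ : Set (ℤ → Bool) := {fun x => decide (x = 1), fun x => decide (x ≠ 1)}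
    let B₂ : Set (ℤ → Bool) := {fun x => decide (x = 2), fun x => decide (x ≠ 2)}
    (∀ x : ℤ, {v | ∃ b ∈ B₁, b x = v} = ({true, false} : Set Bool)) ∧
    (∀ x : ℤ, {v | ∃ b ∈ B₂, b x = v} = ({true, false} : Set Bool)) ∧
    termSet B₁ = {0, 1} ∧ termSet B₂ = {0, 2} := by
  intro B₁ B₂
  refine ⟨?_, ?_, ?_, ?_⟩
  · intro x
    ext v
    simp only [B₁, Set.mem_insert_iff, Set.mem_singleton_iff, Set.mem_setOf_eq]
    constructor
    · rintro ⟨b, hb | hb, rfl⟩ <;> subst hb <;> by_cases h : x = 1 <;> simp [h]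
    · intro _
      by_cases h : x = 1
      · rcases Bool.dichotomy v with rfl | rfl
        · exact ⟨_, Or.inr rfl, by simp [h]⟩
        · exact ⟨_, Or.inl rfl, by simp [h]⟩
      · rcases Bool.dichotomy v with rfl | rfl
        · exact ⟨_, Or.inl rfl, by simp [h]⟩
        · exact ⟨_, Or.inr rfl, by simp [h]⟩
  · intro x
    ext v
    simp only [B₂, Set.mem_insert_iff, Set.mem_singleton_iff, Set.mem_setOf_eq]
    constructor
    · rintro ⟨b, hb | hb, rfl⟩ <;> subst hb <;> by_cases h : x = 2 <;> simp [h]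
    · intro _
      by_cases h : x = 2
      · rcases Bool.dichotomy v with rfl | rfl
        · exact ⟨_, Or.inr rfl, by simp [h]⟩
        · exact ⟨_, Or.inl rfl, by simp [h]⟩
      · rcases Bool.dichotomy v with rfl | rfl
        · exact ⟨_, Or.inl rfl, by simp [h]⟩
        · exact ⟨_, Or.inr rfl, by simp [h]⟩
  · ext y
    simp only [termSet, B₁, Set.mem_insert_iff, Set.mem_singleton_iff, Set.mem_setOf_eq]
    constructor
    · rintro ⟨b, hb | hb, h⟩ <;> subst hb
      · rw [Wb1] at h; exact Or.inl (by simpa using h.symm)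
      · rw [Wb1'] at h; exact Or.inr (by simpa using h.symm)
    · rintro (rfl | rfl)
      · exact ⟨_, Or.inl rfl, Wb1⟩
      · exact ⟨_, Or.inr rfl, Wb1'⟩
  · ext y
    simp only [termSet, B₂, Set.mem_insert_iff, Set.mem_singleton_iff, Set.mem_setOf_eq]
    constructor
    · rintro ⟨b, hb | hb, h⟩ <;> subst hb
      · rw [Wb2] at h; exact Or.inl (by simpa using h.symm)
      · rw [Wb2'] at h; exact Or.inr (by simpa using h.symm)
    · rintro (rfl | rfl)
      · exact ⟨_, Or.inl rfl, Wb2⟩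
      · exact ⟨_, Or.inr rfl, Wb2'⟩
end

section
/- Consequently, no compositional characterization of the loop construct exists for the program-agnostic semantics: there is no function F such that for every set B of guards ℤ → Bool, the terminal-value set from 0 of the loops 'while b do x := x+1' (b ∈ B) equals F applied to the pointwise-image semantics λx. { b x | b ∈ B }. -/
open Classical in
lemma Wb_eq_aux (b : ℤ → Bool) (k : ℕ) (hk : b ((k : ℤ)) = false)
    (hlt : ∀ m : ℕ, m < k → b ((m : ℤ)) = true) : Wb b 0 = some (k : ℤ) := by
  have h : ∃ n : ℕ, b (0 + (n : ℤ)) = false := ⟨k, by simpa using hk⟩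
  rw [Wb, dif_pos h]
  simp only [zero_add, Option.some.injEq, Int.natCast_inj, Nat.find_eq_iff]
  exact ⟨by simpa using hk, fun m hm => by simp [hlt m hm]⟩

/-- No function of the pointwise-image semantics computes the loop terminal sets. -/
theorem no_compositional_loop_characterization :
    ¬ ∃ F : (ℤ → Set Bool) → Set ℤ,
        ∀ B : Set (ℤ → Bool), F (fun x => {v | ∃ b ∈ B, b x = v}) = termSet B := by
  rintro ⟨F, hF⟩
  have key : ∀ (a : ℤ),
      (fun x => {v | ∃ b ∈ ({fun x => decide (x = a), fun x => decide (x ≠ a)} :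
        Set (ℤ → Bool)), b x = v}) = fun _ => (Set.univ : Set Bool) := by
    intro a
    funext x
    ext v
    simp only [Set.mem_univ, iff_true, Set.mem_setOf_eq, Set.mem_insert_iff,
      Set.mem_singleton_iff]
    by_cases h : x = a
    · cases v
      · exact ⟨_, Or.inr rfl, by simp [h]⟩
      · exact ⟨_, Or.inl rfl, by simp [h]⟩
    · cases v
      · exact ⟨_, Or.inl rfl, by simp [h]⟩
      · exact ⟨_, Or.inr rfl, by simp [h]⟩
  have h1 := hF ({fun x => decide (x = 1), fun x => decide (x ≠ 1)} : Set (ℤ → Bool))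
  have h2 := hF ({fun x => decide (x = 2), fun x => decide (x ≠ 2)} : Set (ℤ → Bool))
  rw [key 1] at h1
  rw [key 2] at h2
  have heq := h1.symm.trans h2
  -- 2 ∈ termSet B2
  have hmem : (2 : ℤ) ∈ termSet ({fun x => decide (x = 2), fun x => decide (x ≠ 2)} :
      Set (ℤ → Bool)) := by
    refine ⟨fun x => decide (x ≠ 2), Or.inr rfl, ?_⟩
    have := Wb_eq_aux (fun x => decide (x ≠ 2)) 2 (by simp)
      (fun m hm => by
        have : (m : ℤ) < 2 := by exact_mod_cast hm
        simp [ne_of_lt this])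
    simpa using this
  rw [← heq] at hmem
  -- but 2 ∉ termSet B1
  obtain ⟨b, hb, hWb⟩ := hmem
  rcases hb with rfl | rfl
  · have := Wb_eq_aux (fun x => decide (x = 1)) 0 (by simp) (fun m hm => by omega)
    simp only [Nat.cast_zero] at this
    rw [this] at hWb
    simp at hWb
  · have := Wb_eq_aux (fun x => decide (x ≠ 1)) 1 (by simp)
      (fun m hm => by
        have hm0 : m = 0 := by omega
        simp [hm0])
    simp only [Nat.cast_one] at this
    rw [this] at hWb
    simp at hWb
end

section
/- The vector-state semantics of a set of while-loops is determined by the vector-state semantics of guards and bodies (compositionality for loops, single-input case): for sets B of guards ℤ → Bool and S of bodies ℤ → ℤ, and any σ, σ' : ℤ, there exist b ∈ B and s ∈ S with the loop 'while b do x := s x' mapping σ to σ' if and only if there exists a finite trace t : Fin (n+1) → ℤ with t 0 = σ, t n = σ', such that the Boolean vector (true,…,true,false) of length n+1 lies in VS_B(B, t) and the vector (t 1, …, t n) lies in VS(S, (t 0, …, t_{n-1})). -/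
/-- Vector semantics of a set of functions on a finite input vector. -/
def VSF {α β : Type*} (S : Set (α → β)) {m : ℕ} (u : Fin m → α) : Set (Fin m → β) :=
  {w | ∃ f ∈ S, w = fun i => f (u i)}

/-- The semantics of a set of while-loops is determined by the vector-state semantics of
the guards and bodies: there is a loop mapping `σ` to `σ'` iff some finite trace is
validated by the guard semantics (true everywhere except last) and the body semantics. -/
theorem loop_vs_compositional (B : Set (ℤ → Bool)) (S : Set (ℤ → ℤ)) (σ σ' : ℤ) :
    (∃ b ∈ B, ∃ s ∈ S, ∃ k : ℕ,
        s^[k] σ = σ' ∧ (∀ j < k, b (s^[j] σ) = true) ∧ b σ' = false) ↔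
    (∃ n : ℕ, ∃ t : Fin (n + 1) → ℤ,
        t 0 = σ ∧ t (Fin.last n) = σ' ∧
        (fun i : Fin (n + 1) => decide ((i : ℕ) < n)) ∈ VSF B t ∧
        (fun i : Fin n => t i.succ) ∈ VSF S (fun i : Fin n => t i.castSucc)) := by
  constructor
  · rintro ⟨b, hb, s, hs, k, hk, hlt, hfin⟩
    refine ⟨k, fun i => s^[(i : ℕ)] σ, by simp, by simp [Fin.last, hk], ⟨b, hb, ?_⟩,
      ⟨s, hs, ?_⟩⟩
    · funext i
      rcases lt_or_eq_of_le (Nat.lt_succ_iff.mp i.isLt) with h | h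
      · simp [h, hlt _ h]
      · simp [h, hk, hfin]
    · funext i
      simp [Function.iterate_succ_apply']
  · rintro ⟨n, t, h0, hlast, ⟨b, hb, hbt⟩, ⟨s, hs, hst⟩⟩
    have key : ∀ i : Fin (n + 1), t i = s^[(i : ℕ)] σ := by
      intro i
      induction i using Fin.induction with
      | zero => simpa using h0
      | succ i ih =>
        have := congrFun hst i
        simp only at this
        rw [this, ih]
        simp [Function.iterate_succ_apply']
    refine ⟨b, hb, s, hs, n, ?_, ?_, ?_⟩
    · rw [← hlast, key (Fin.last n)]; rfl
    · intro j hj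
      have := congrFun hbt ⟨j, Nat.lt_succ_of_lt hj⟩
      simp only [Fin.val_mk, hj, decide_true] at this
      rw [key ⟨j, Nat.lt_succ_of_lt hj⟩] at this
      exact this.symm
    · have := congrFun hbt (Fin.last n)
      simp only [Fin.val_last, lt_irrefl, decide_false] at this
      rw [hlast] at this
      exact this.symm
end

section
/- A function on sets of total functions that merges diverging inputs entirely cannot be compositional over bounded iteration: define, for sets S of partial functions ℤ → Option ℤ, the semantics NC(S)(v) for a finite vector v as { map of h over v | h ∈ S, h defined on all entries of v } ∪ { ↑ | ∃ h ∈ S, ∃ entry of v on which h is undefined }. Then there exist finite sets S, S' of partial functions with NC(S) = NC(S') (as functions of v), but such that the 5-fold self-compositions satisfy NC(S⁵) ≠ NC(S'⁵), where S⁵ = { h₁ ∘ₒ h₂ ∘ₒ h₃ ∘ₒ h₄ ∘ₒ h₅ | all hᵢ equal to a single h ∈ S } (the diagonal 5-fold Kleisli self-composition { h^∘5 | h ∈ S }). -/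
/-- Kleisli composition of partial functions `ℤ → Option ℤ`. -/
def kcomp (g f : ℤ → Option ℤ) : ℤ → Option ℤ := fun x => (f x).bind g

/-- The 5-fold Kleisli self-composition. -/
def pow5 (h : ℤ → Option ℤ) : ℤ → Option ℤ :=
  kcomp h (kcomp h (kcomp h (kcomp h h)))

/-- The semantics that merges all diverging behaviors into a single `↑` (here `none`):
`List.mapM h v` is `none` exactly when `h` is undefined on some entry of `v`. -/
def NC (S : Set (ℤ → Option ℤ)) (v : List ℤ) : Set (Option (List ℤ)) :=
  {o | ∃ h ∈ S, List.mapM h v = o}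

def H1 : ℤ → Option ℤ := fun _ => some 1
def H2 : ℤ → Option ℤ := fun _ => some 2
def H1' : ℤ → Option ℤ := fun x => if x = 1 then none else some 1
def H2' : ℤ → Option ℤ := fun x => if x = 1 then none else some 2

lemma mapM_mem (v : List ℤ) (h : ℤ → Option ℤ) (hv : (1:ℤ) ∈ v)
    (hb : h 1 = none) : List.mapM h v = none := by
  rw [← List.mapM'_eq_mapM]
  induction v with
  | nil => simp at hv
  | cons a l ih =>
    rcases List.mem_cons.mp hv with rfl | hl
    · simp [hb]
    · cases ha : h a with
      | none => simp [ha]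
      | some b => simp [ha, ih hl]

lemma mapM_not_mem (v : List ℤ) (h h' : ℤ → Option ℤ) (hv : (1:ℤ) ∉ v)
    (hb : ∀ x : ℤ, x ≠ 1 → h x = h' x) : List.mapM h v = List.mapM h' v := by
  rw [← List.mapM'_eq_mapM, ← List.mapM'_eq_mapM]
  induction v with
  | nil => rfl
  | cons a l ih =>
    have ha : a ≠ 1 := fun h => hv (h ▸ (List.mem_cons_self : a ∈ a :: l))
    have hl : (1:ℤ) ∉ l := fun h => hv (List.mem_cons_of_mem a h)
    simp [hb a ha, ih hl]

/-- The divergence-merging semantics `NC` is not compositional over (diagonal 5-fold)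
iteration: two finite sets with equal `NC` semantics whose diagonal 5-fold Kleisli
self-compositions have different `NC` semantics. -/
theorem nc_noncompositional :
    ∃ S S' : Set (ℤ → Option ℤ), S.Finite ∧ S'.Finite ∧
      (∀ v : List ℤ, NC S v = NC S' v) ∧
      NC {g | ∃ h ∈ S, g = pow5 h} ≠ NC {g | ∃ h ∈ S', g = pow5 h} := by
  refine ⟨{H1, H2, H2'}, {H1, H2, H1'}, (Set.finite_singleton _).insert _ |>.insert _,
    (Set.finite_singleton _).insert _ |>.insert _, ?_, ?_⟩
  · intro v
    ext o
    constructor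
    · rintro ⟨h, hmem, rfl⟩
      rcases hmem with rfl | rfl | rfl
      · exact ⟨H1, by simp, rfl⟩
      · exact ⟨H2, by simp, rfl⟩
      · by_cases hv : (1:ℤ) ∈ v
        · refine ⟨H1', by simp, ?_⟩
          rw [mapM_mem v H1' hv (by simp [H1']), mapM_mem v H2' hv (by simp [H2'])]
        · refine ⟨H2, by simp, ?_⟩
          exact (mapM_not_mem v H2' H2 hv (fun x hx => by simp [H2, H2', hx])).symm
    · rintro ⟨h, hmem, rfl⟩
      rcases hmem with rfl | rfl | rfl
      · exact ⟨H1, by simp, rfl⟩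
      · exact ⟨H2, by simp, rfl⟩
      · by_cases hv : (1:ℤ) ∈ v
        · refine ⟨H2', by simp, ?_⟩
          rw [mapM_mem v H2' hv (by simp [H2']), mapM_mem v H1' hv (by simp [H1'])]
        · refine ⟨H1, by simp, ?_⟩
          exact (mapM_not_mem v H1' H1 hv (fun x hx => by simp [H1, H1', hx])).symm
  · intro hEq
    have h01 : none ∈ NC {g | ∃ h ∈ ({H1, H2, H1'} : Set (ℤ → Option ℤ)), g = pow5 h} [0] := by
      refine ⟨pow5 H1', ⟨H1', by simp, rfl⟩, ?_⟩
      rw [← List.mapM'_eq_mapM]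
      simp [pow5, kcomp, H1']
    rw [← hEq] at h01
    obtain ⟨g, ⟨h, hmem, rfl⟩, hg⟩ := h01
    rw [← List.mapM'_eq_mapM] at hg
    rcases hmem with rfl | rfl | rfl <;>
      simp [pow5, kcomp, H1, H2, H2'] at hg
end
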